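/- Let α ∈ (0, 1/2), j_0 = (log(1/α))³/α, j_1 = j_0². For j_0 ≤ j ≤ j_1 let P_j be the set of primes in [(1+α)^j, (1+α)^{j+1}) and Q_j the set of integers m ∈ [1, N/(1+α)^{j+1}] having no prime factor in ∪_{i ≤ j} P_i. Then the products m·r with r ∈ P_j, m ∈ Q_j, over all j ∈ [j_0, j_1], are pairwise distinct and lie in [1, N]; consequently ∑_{j_0 ≤ j ≤ j_1} |P_j|·|Q_j| ≤ N. -/

import Mathlib

open Classical
open Finset

/-!
If `r ∈ P_j` divides `m' r'` with `r' ∈ P_{j'}`, `m' ∈ Q_{j'}` and `j ≤ j'`, then `r` cannot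
divide `m'` (which has no prime factor in `P_i` for `i ≤ j'`), so `r = r'`; the intervals
`[b^j, b^{j+1})` being disjoint, also `j = j'`, and then `m = m'`. Hence `(j, r, m) ↦ m r` is an
injection into `[1, N]`, which bounds `∑_j |P_j| |Q_j|` by `N`.
-/

lemma Nat.mul_le_of_lt_of_le_div {x : ℝ} (hx : 0 < x) {m r N : ℕ} (hr : (r : ℝ) < x)
    (hm : (m : ℝ) ≤ N / x) : m * r ≤ N := by
  have : (m : ℝ) * r ≤ N :=
    calc (m : ℝ) * r ≤ m * x := by gcongr
      _ ≤ N := (le_div_iff₀ hx).mp hm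
  exact_mod_cast this

lemma eq_of_mem_Ico_pow {b x : ℝ} (hb : 1 ≤ b) {j j' : ℕ}
    (h : x ∈ Set.Ico (b ^ j) (b ^ (j + 1))) (h' : x ∈ Set.Ico (b ^ j') (b ^ (j' + 1))) :
    j = j' := by
  have key : ∀ {k k' : ℕ}, x ∈ Set.Ico (b ^ k) (b ^ (k + 1)) →
      x ∈ Set.Ico (b ^ k') (b ^ (k' + 1)) → ¬ k < k' := fun hk hk' hlt =>
    (hk.2.trans_le ((pow_le_pow_right₀ hb hlt).trans hk'.1)).false
  exact le_antisymm (not_lt.mp (key h' h)) (not_lt.mp (key h h'))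

lemma Nat.Prime.eq_and_eq_of_mul_eq_mul {r r' m m' : ℕ} (hr : r.Prime) (hr' : r'.Prime)
    (hrm' : ¬ r ∣ m') (h : m * r = m' * r') : r = r' ∧ m = m' := by
  have hrr' : r = r' := by
    have hdvd : r ∣ m' * r' := h ▸ dvd_mul_left r m
    rcases hr.dvd_mul.mp hdvd with hm' | hr'dvd
    · exact absurd hm' hrm'
    · exact (Nat.prime_dvd_prime_iff_eq hr hr').mp hr'dvd
  subst hrr'
  exact ⟨rfl, Nat.eq_of_mul_eq_mul_right hr.pos h⟩

section PrimeBlocks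

variable {b : ℝ} {N : ℕ} {P Q : ℕ → Finset ℕ}

lemma mul_mem_Icc_of_mem_blocks (hb : 0 < b)
    (hP : ∀ j, ∀ r ∈ P j, r.Prime ∧ (r : ℝ) ∈ Set.Ico (b ^ j) (b ^ (j + 1)))
    (hQ : ∀ j, ∀ m ∈ Q j, 1 ≤ m ∧ (m : ℝ) ≤ N / b ^ (j + 1))
    {j r m : ℕ} (hr : r ∈ P j) (hm : m ∈ Q j) : m * r ∈ Icc 1 N := by
  obtain ⟨hrp, -, hrlt⟩ := hP j r hr
  obtain ⟨hm1, hmle⟩ := hQ j m hm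
  exact mem_Icc.mpr ⟨Nat.one_le_iff_ne_zero.mpr (Nat.mul_ne_zero (by omega) hrp.ne_zero),
    Nat.mul_le_of_lt_of_le_div (pow_pos hb _) hrlt hmle⟩

lemma eq_of_mul_eq_mul_of_mem_blocks (hb : 1 ≤ b)
    (hP : ∀ j, ∀ r ∈ P j, r.Prime ∧ (r : ℝ) ∈ Set.Ico (b ^ j) (b ^ (j + 1)))
    (hQ : ∀ j, ∀ m ∈ Q j, ∀ q : ℕ, q.Prime → q ∣ m → ∀ i ≤ j, q ∉ P i)
    {j j' r r' m m' : ℕ} (hr : r ∈ P j) (hm : m ∈ Q j) (hr' : r' ∈ P j') (hm' : m' ∈ Q j')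
    (h : m * r = m' * r') : j = j' ∧ r = r' ∧ m = m' := by
  wlog hjj' : j ≤ j' generalizing j j' r r' m m'
  · obtain ⟨h₁, h₂, h₃⟩ := this hr' hm' hr hm h.symm (le_of_not_ge hjj')
    exact ⟨h₁.symm, h₂.symm, h₃.symm⟩
  obtain ⟨hrp, hrI⟩ := hP j r hr
  obtain ⟨hrp', hrI'⟩ := hP j' r' hr'
  obtain ⟨rfl, rfl⟩ :=
    hrp.eq_and_eq_of_mul_eq_mul hrp' (fun hdvd => hQ j' m' hm' r hrp hdvd j hjj' hr) h
  exact ⟨eq_of_mem_Ico_pow hb hrI hrI', rfl, rfl⟩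

lemma sum_card_mul_card_le_of_mem_blocks (hb : 1 ≤ b)
    (hP : ∀ j, ∀ r ∈ P j, r.Prime ∧ (r : ℝ) ∈ Set.Ico (b ^ j) (b ^ (j + 1)))
    (hQ : ∀ j, ∀ m ∈ Q j, 1 ≤ m ∧ (m : ℝ) ≤ N / b ^ (j + 1) ∧
      ∀ q : ℕ, q.Prime → q ∣ m → ∀ i ≤ j, q ∉ P i)
    (J : Finset ℕ) : ∑ j ∈ J, #(P j) * #(Q j) ≤ N := by
  have hmaps : ∀ x ∈ J.sigma (fun j => P j ×ˢ Q j), x.2.2 * x.2.1 ∈ Icc 1 N := by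
    rintro ⟨j, r, m⟩ hx
    simp only [mem_sigma, mem_product] at hx
    exact mul_mem_Icc_of_mem_blocks (by linarith) hP
      (fun j m hm => ⟨(hQ j m hm).1, (hQ j m hm).2.1⟩) hx.2.1 hx.2.2
  have hinj : Set.InjOn (fun x : (_ : ℕ) × ℕ × ℕ => x.2.2 * x.2.1)
      (J.sigma fun j => P j ×ˢ Q j) := by
    rintro ⟨j, r, m⟩ hx ⟨j', r', m'⟩ hx' h
    simp only [coe_sigma, Set.mem_sigma_iff, coe_product, Set.mem_prod, mem_coe] at hx hx' h
    obtain ⟨rfl, rfl, rfl⟩ := eq_of_mul_eq_mul_of_mem_blocks hb hP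
      (fun j m hm => (hQ j m hm).2.2) hx.2.1 hx.2.2 hx'.2.1 hx'.2.2 h
    rfl
  calc ∑ j ∈ J, #(P j) * #(Q j)
    _ = #(J.sigma fun j => P j ×ˢ Q j) := by simp only [card_sigma, card_product]
    _ ≤ #(Icc 1 N) := card_le_card_of_injOn _ hmaps hinj
    _ = N := Nat.card_Icc 1 N

end PrimeBlocks

theorem stmt_15_general (N : ℕ) (α : ℝ) (hα0 : 0 < α)
    (j₀ j₁ : ℝ)
    (P Q : ℕ → Finset ℕ)
    (hP : ∀ j, P j = (Finset.range (N + 1)).filter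
      (fun r : ℕ => r.Prime ∧ (1 + α) ^ j ≤ (r : ℝ) ∧ (r : ℝ) < (1 + α) ^ (j + 1)))
    (hQ : ∀ j, Q j = (Finset.Icc 1 N).filter
      (fun m : ℕ => (m : ℝ) ≤ (N : ℝ) / (1 + α) ^ (j + 1) ∧
        ∀ q : ℕ, q.Prime → q ∣ m → ∀ i ≤ j, q ∉ P i)) :
    (∀ j ∈ Icc ⌈j₀⌉₊ ⌊j₁⌋₊, ∀ r ∈ P j, ∀ m ∈ Q j, 1 ≤ m * r ∧ m * r ≤ N) ∧
    (∀ j ∈ Icc ⌈j₀⌉₊ ⌊j₁⌋₊, ∀ j' ∈ Icc ⌈j₀⌉₊ ⌊j₁⌋₊,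
      ∀ r ∈ P j, ∀ m ∈ Q j, ∀ r' ∈ P j', ∀ m' ∈ Q j',
        m * r = m' * r' → j = j' ∧ r = r' ∧ m = m') ∧
    ∑ j ∈ Icc ⌈j₀⌉₊ ⌊j₁⌋₊, (P j).card * (Q j).card ≤ N := by
  have hb : (1 : ℝ) ≤ 1 + α := by linarith
  have hP' : ∀ j, ∀ r ∈ P j,
      r.Prime ∧ (r : ℝ) ∈ Set.Ico ((1 + α) ^ j) ((1 + α) ^ (j + 1)) := by
    intro j r hr
    rw [hP, mem_filter] at hr
    exact hr.2
  have hQ' : ∀ j, ∀ m ∈ Q j, 1 ≤ m ∧ (m : ℝ) ≤ N / (1 + α) ^ (j + 1) ∧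
      ∀ q : ℕ, q.Prime → q ∣ m → ∀ i ≤ j, q ∉ P i := by
    intro j m hm
    rw [hQ, mem_filter, mem_Icc] at hm
    exact ⟨hm.1.1, hm.2⟩
  refine ⟨fun j _ r hr m hm => ?_, fun j _ j' _ r hr m hm r' hr' m' hm' =>
    eq_of_mul_eq_mul_of_mem_blocks hb hP' (fun j m hm => (hQ' j m hm).2.2) hr hm hr' hm',
    sum_card_mul_card_le_of_mem_blocks hb hP' hQ' _⟩
  exact mem_Icc.mp (mul_mem_Icc_of_mem_blocks (by linarith) hP'
    (fun j m hm => ⟨(hQ' j m hm).1, (hQ' j m hm).2.1⟩) hr hm)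

/-- With `P_j` the primes in `[(1+α)^j, (1+α)^{j+1})` and `Q_j` the integers
`m ∈ [1, N/(1+α)^{j+1}]` without prime factors in `∪_{i ≤ j} P_i`, the products `m·r`
with `r ∈ P_j`, `m ∈ Q_j`, `j ∈ [j_0, j_1]`, are pairwise distinct and lie in `[1, N]`;
consequently `∑_j |P_j|·|Q_j| ≤ N`. -/
theorem stmt_15 (N : ℕ) (hN : 0 < N) (α : ℝ) (hα0 : 0 < α) (hα1 : α < 1 / 2)
    (j₀ j₁ : ℝ)
    (hj₀ : j₀ = (Real.log (1 / α)) ^ 3 / α) (hj₁ : j₁ = j₀ ^ 2)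
    (P Q : ℕ → Finset ℕ)
    (hP : ∀ j, P j = (Finset.range (N + 1)).filter
      (fun r : ℕ => r.Prime ∧ (1 + α) ^ j ≤ (r : ℝ) ∧ (r : ℝ) < (1 + α) ^ (j + 1)))
    (hQ : ∀ j, Q j = (Finset.Icc 1 N).filter
      (fun m : ℕ => (m : ℝ) ≤ (N : ℝ) / (1 + α) ^ (j + 1) ∧
        ∀ q : ℕ, q.Prime → q ∣ m → ∀ i ≤ j, q ∉ P i)) :
    (∀ j ∈ Icc ⌈j₀⌉₊ ⌊j₁⌋₊, ∀ r ∈ P j, ∀ m ∈ Q j, 1 ≤ m * r ∧ m * r ≤ N) ∧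
    (∀ j ∈ Icc ⌈j₀⌉₊ ⌊j₁⌋₊, ∀ j' ∈ Icc ⌈j₀⌉₊ ⌊j₁⌋₊,
      ∀ r ∈ P j, ∀ m ∈ Q j, ∀ r' ∈ P j', ∀ m' ∈ Q j',
        m * r = m' * r' → j = j' ∧ r = r' ∧ m = m') ∧
    ∑ j ∈ Icc ⌈j₀⌉₊ ⌊j₁⌋₊, (P j).card * (Q j).card ≤ N :=
  stmt_15_general N α hα0 j₀ j₁ P Q hP hQ
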